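/- arXiv:2509.19235 — 2 statements merged into one kernel-verified Lean document; each statement's English description precedes it below -/
import Mathlib

section
/- For the α-F distributed power X with parameters α, μ, m, λ and mean-square Ω, the n-th moment is E[Xⁿ] = (c^{2n/α}) · Γ(μ + 2n/α)·Γ(m − 2n/α) / (Γ(μ)·Γ(m)), where c = (m−1)Ω^{α/2}/(λ^{α/2}μ), valid whenever −αμ/2 < n < αm/2. -/
/-! The substitution `y = x ^ (α / 2)` and the rescaling `y = c u` turn the moment integral into
the beta integral of the second kind `∫₀^∞ u ^ (p - 1) (1 + u) ^ (-(p + q)) du = B(p, q)`,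
with `p = μ + 2n/α` and `q = m - 2n/α`; the bounds on `n` are exactly `p, q > 0`. That integral
is the usual beta integral over `(0, 1)` after `u = t / (1 - t)`. -/

open MeasureTheory Set Real

lemma integral_Ioo_rpow_mul_one_sub_rpow {p q : ℝ} (hp : 0 < p) (hq : 0 < q) :
    ∫ t in Ioo (0:ℝ) 1, t ^ (p - 1) * (1 - t) ^ (q - 1) = ProbabilityTheory.beta p q := by
  rw [ProbabilityTheory.beta_eq_betaIntegralReal p q hp hq, Complex.betaIntegral,
    intervalIntegral.integral_of_le zero_le_one, ← integral_Ioc_eq_integral_Ioo,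
    ← RCLike.re_to_complex, ← integral_re]
  · refine setIntegral_congr_fun measurableSet_Ioc fun t ht => ?_
    rw [RCLike.re_to_complex, ← Complex.ofReal_re (t ^ (p - 1) * (1 - t) ^ (q - 1))]
    push_cast [Complex.ofReal_cpow ht.1.le, Complex.ofReal_cpow (sub_nonneg.2 ht.2)]
    rfl
  · have := Complex.betaIntegral_convergent (u := p) (v := q) (by simpa) (by simpa)
    rwa [intervalIntegrable_iff_integrableOn_Ioc_of_le zero_le_one] at this

lemma image_div_one_sub_Ioo : (fun t : ℝ => t / (1 - t)) '' Ioo 0 1 = Ioi 0 := by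
  ext u
  refine ⟨fun ⟨t, ht, htu⟩ => htu ▸ div_pos ht.1 (sub_pos.2 ht.2), fun hu => ?_⟩
  have hu : 0 < u := hu
  refine ⟨u / (1 + u), ⟨by positivity, (div_lt_one (by positivity)).2 (by linarith)⟩, ?_⟩
  field_simp
  ring

lemma strictMonoOn_div_one_sub : StrictMonoOn (fun t : ℝ => t / (1 - t)) (Ioo 0 1) := by
  intro a ha b hb hab
  rw [div_lt_div_iff₀ (sub_pos.2 ha.2) (sub_pos.2 hb.2)]
  nlinarith

lemma hasDerivAt_div_one_sub {t : ℝ} (ht : t ≠ 1) :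
    HasDerivAt (fun t : ℝ => t / (1 - t)) (((1 - t) ^ 2)⁻¹) t := by
  refine ((hasDerivAt_id t).div ((hasDerivAt_const t 1).sub (hasDerivAt_id t))
    (sub_ne_zero.2 ht.symm)).congr_deriv ?_
  simp only [Pi.sub_apply, id]
  ring

lemma integral_Ioi_rpow_mul_one_add_rpow_neg {p q : ℝ} (hp : 0 < p) (hq : 0 < q) :
    ∫ u in Ioi (0:ℝ), u ^ (p - 1) * (1 + u) ^ (-(p + q)) = ProbabilityTheory.beta p q := by
  rw [← integral_Ioo_rpow_mul_one_sub_rpow hp hq, ← image_div_one_sub_Ioo,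
    integral_image_eq_integral_abs_deriv_smul measurableSet_Ioo
      (fun t ht => (hasDerivAt_div_one_sub ht.2.ne).hasDerivWithinAt)
      strictMonoOn_div_one_sub.injOn]
  refine setIntegral_congr_fun measurableSet_Ioo fun t ⟨ht0, ht1⟩ => ?_
  have hs : 0 < 1 - t := sub_pos.2 ht1
  have h1 : 1 + t / (1 - t) = (1 - t)⁻¹ := by field_simp; ring
  rw [smul_eq_mul, h1, abs_of_pos (by positivity), div_rpow ht0.le hs.le, inv_rpow hs.le,
    ← rpow_neg hs.le, ← rpow_natCast, ← rpow_neg hs.le, div_eq_mul_inv, ← rpow_neg hs.le]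
  rw [mul_left_comm, mul_assoc, ← rpow_add hs, ← rpow_add hs]
  congr 2
  push_cast
  ring

lemma integral_Ioi_rpow_mul_add_rpow_neg {c p q : ℝ} (hc : 0 < c) (hp : 0 < p) (hq : 0 < q) :
    ∫ y in Ioi (0:ℝ), y ^ (p - 1) * (y + c) ^ (-(p + q)) =
      c ^ (-q) * ProbabilityTheory.beta p q := by
  have hscale := integral_comp_mul_left_Ioi' (fun y => y ^ (p - 1) * (y + c) ^ (-(p + q))) 0 hc
  rw [mul_zero] at hscale
  rw [← hscale, ← integral_Ioi_rpow_mul_one_add_rpow_neg hp hq, smul_eq_mul,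
    ← integral_const_mul, ← integral_const_mul]
  refine setIntegral_congr_fun measurableSet_Ioi fun u (hu : 0 < u) => ?_
  have hcu : c * u + c = c * (1 + u) := by ring
  rw [hcu, mul_rpow hc.le hu.le, mul_rpow hc.le (by positivity),
    show -q = 1 + (p - 1) + -(p + q) by ring, rpow_add hc, rpow_add hc, rpow_one]
  ring

lemma integral_Ioi_rpow_mul_comp_rpow {E : Type*} [NormedAddCommGroup E] [NormedSpace ℝ E]
    (f : ℝ → E) {a : ℝ} (ha : 0 < a) (s : ℝ) :
    ∫ x in Ioi (0:ℝ), x ^ (s - 1) • f (x ^ a) =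
      a⁻¹ • ∫ y in Ioi (0:ℝ), y ^ (s / a - 1) • f y := by
  conv_rhs => rw [← integral_comp_rpow_Ioi_of_pos ha, ← integral_smul]
  refine setIntegral_congr_fun measurableSet_Ioi fun x (hx : 0 < x) => ?_
  have hpow : a⁻¹ * (a * x ^ (a - 1)) * (x ^ a) ^ (s / a - 1) = x ^ (s - 1) := by
    rw [← rpow_mul hx.le, ← mul_assoc, inv_mul_cancel₀ ha.ne', one_mul, ← rpow_add hx]
    congr 1
    field_simp
    ring
  rw [smul_smul, smul_smul, hpow]

lemma integral_Ioi_rpow_mul_rpow_add_rpow_neg {a c r s : ℝ} (ha : 0 < a) (hc : 0 < c)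
    (hs : 0 < s) (hsr : s < a * r) :
    ∫ x in Ioi (0:ℝ), x ^ (s - 1) * (x ^ a + c) ^ (-r) =
      a⁻¹ * (c ^ (s / a - r) * ProbabilityTheory.beta (s / a) (r - s / a)) := by
  have hsub := integral_Ioi_rpow_mul_comp_rpow (fun y => (y + c) ^ (-r)) ha s
  simp only [smul_eq_mul] at hsub
  rw [hsub, show -r = -(s / a + (r - s / a)) by ring,
    integral_Ioi_rpow_mul_add_rpow_neg hc (div_pos hs ha)
      (sub_pos.2 ((div_lt_iff₀' ha).2 hsr)), neg_sub]

theorem alphaF_moments (α μ m lam Ω n : ℝ)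
    (hα : 0 < α) (hμ : 0 < μ) (hm : 1 < m) (hlam : 0 < lam) (hΩ : 0 < Ω)
    (hn1 : -(α * μ / 2) < n) (hn2 : n < α * m / 2) :
    ∫ x in Ioi (0:ℝ),
      x ^ n * ((α / (2 * (Real.Gamma μ * Real.Gamma m / Real.Gamma (μ + m)))) *
        ((m - 1) * Ω ^ (α/2) / (lam ^ (α/2) * μ)) ^ m *
        x ^ (α * μ / 2 - 1) *
        (x ^ (α/2) + (m - 1) * Ω ^ (α/2) / (lam ^ (α/2) * μ)) ^ (-(m + μ))) =
      ((m - 1) * Ω ^ (α/2) / (lam ^ (α/2) * μ)) ^ (2 * n / α) *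
        (Real.Gamma (μ + 2 * n / α) * Real.Gamma (m - 2 * n / α)) /
        (Real.Gamma μ * Real.Gamma m) := by
  set c := (m - 1) * Ω ^ (α/2) / (lam ^ (α/2) * μ)
  have hc : 0 < c := div_pos (mul_pos (by linarith) (by positivity)) (by positivity)
  set K := α / (2 * (Gamma μ * Gamma m / Gamma (μ + m))) * c ^ m with hK
  have hintegrand : ∀ x ∈ Ioi (0:ℝ),
      x ^ n * (K * x ^ (α * μ / 2 - 1) * (x ^ (α/2) + c) ^ (-(m + μ))) =
        K * (x ^ (n + α * μ / 2 - 1) * (x ^ (α/2) + c) ^ (-(m + μ))) := by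
    intro x (hx : 0 < x)
    rw [add_sub_assoc, rpow_add hx]
    ring
  have hs : 0 < n + α * μ / 2 := by linarith
  have hsr : n + α * μ / 2 < α / 2 * (m + μ) := by linarith
  have hp : (n + α * μ / 2) / (α / 2) = μ + 2 * n / α := by field_simp; ring
  have hq : m + μ - (μ + 2 * n / α) = m - 2 * n / α := by ring
  rw [setIntegral_congr_fun measurableSet_Ioi hintegrand, integral_const_mul,
    integral_Ioi_rpow_mul_rpow_add_rpow_neg (by positivity) hc hs hsr, hp, hq]
  have hcpow : c ^ m * c ^ (μ + 2 * n / α - (m + μ)) = c ^ (2 * n / α) := by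
    rw [← rpow_add hc]; congr 1; ring
  have hΓ : Gamma (μ + 2 * n / α + (m - 2 * n / α)) = Gamma (μ + m) := by congr 1; ring
  have hΓμ := (Gamma_pos_of_pos hμ).ne'
  have hΓm := (Gamma_pos_of_pos (by linarith : 0 < m)).ne'
  have hΓμm := (Gamma_pos_of_pos (by linarith : 0 < μ + m)).ne'
  rw [hK, ← hcpow, ProbabilityTheory.beta, hΓ]
  field_simp
end

section
/- For the product V = X·Z (α-F fading times pointing error), the density satisfies f_V(v) = c₁ v^{αμ/2 − 1} ∫₀^∞ y e^{−y(β−αμ)/2} (v^{α/2} e^{αy/2} + c₂)^{−(m+μ)} dy, where c₁ = (β²α/(8B(μ,m)))·c₂^m and c₂ is the α-F scale constant, via the substitution z = e^{−y} in the product-density integral f_V(v) = ∫₀¹ (1/z) f_X(v/z) f_Z(z) dz. -/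
open MeasureTheory Set Real

/-!
Substituting `z = exp (-y)` maps `(0, ∞)` onto `(0, 1)` with `dz = -exp (-y) dy`. The Jacobian
`exp (-y)` cancels the factor `1 / z`, the logarithm becomes `-y`, and the powers of `v / z = v eʸ`
and of `z` collect into the single exponential `exp (-y (β - αμ) / 2)`.
-/

theorem integral_comp_exp_neg_Ioi {E : Type*} [NormedAddCommGroup E] [NormedSpace ℝ E]
    (g : ℝ → E) (a : ℝ) :
    ∫ y in Ioi a, exp (-y) • g (exp (-y)) = ∫ z in Ioo 0 (exp (-a)), g z := by
  have himage : (fun y ↦ exp (-y)) '' Ioi a = Ioo 0 (exp (-a)) := by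
    rw [← image_exp_Iio, ← image_neg_Ioi, image_image]
  have hderiv : ∀ y ∈ Ioi a, HasDerivWithinAt (fun y ↦ exp (-y)) (-exp (-y)) (Ioi a) y :=
    fun y _ ↦ (hasDerivAt_neg y).exp.hasDerivWithinAt.congr_deriv (by ring)
  rw [← himage, eq_comm, integral_image_eq_integral_abs_deriv_smul measurableSet_Ioi hderiv
    (exp_injective.comp neg_injective).injOn]
  simp only [abs_neg, abs_of_pos (exp_pos _)]

theorem div_exp_neg_rpow {v : ℝ} (hv : 0 ≤ v) (y p : ℝ) :
    (v / exp (-y)) ^ p = v ^ p * exp (y * p) := by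
  rw [div_eq_mul_inv, ← exp_neg, neg_neg, mul_rpow hv (exp_pos y).le, ← exp_mul]

theorem product_density_integrand_comp_exp_neg (α μ m β c₂ B : ℝ) {v : ℝ} (hv : 0 < v) (y : ℝ) :
    exp (-y) * ((1 / exp (-y)) *
        ((α / (2 * B)) * c₂ ^ m *
          (v / exp (-y)) ^ (α * μ / 2 - 1) * ((v / exp (-y)) ^ (α/2) + c₂) ^ (-(m + μ))) *
        (-(β^2/4) * log (exp (-y)) * exp (-y) ^ (β/2 - 1))) =
      (β^2 * α / (8 * B)) * c₂ ^ m * v ^ (α * μ / 2 - 1) *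
        (y * exp (-y * (β - α * μ) / 2) * (v ^ (α/2) * exp (α * y / 2) + c₂) ^ (-(m + μ))) := by
  have hexp : exp (-y * (β - α * μ) / 2) = exp (y * (α * μ / 2 - 1)) * exp (-y) ^ (β/2 - 1) := by
    rw [← exp_mul, ← exp_add]; ring_nf
  rw [div_exp_neg_rpow hv.le, div_exp_neg_rpow hv.le, log_exp, hexp, mul_comm α y,
    mul_div_assoc]
  field_simp
  ring

theorem product_density_integral_form_general (α μ m β c₂ v : ℝ) (hv : 0 < v) :
    ∫ z in Ioo (0:ℝ) 1,
      (1 / z) *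
        ((α / (2 * (Real.Gamma μ * Real.Gamma m / Real.Gamma (μ + m)))) * c₂ ^ m *
          (v / z) ^ (α * μ / 2 - 1) * ((v / z) ^ (α/2) + c₂) ^ (-(m + μ))) *
        (-(β^2/4) * Real.log z * z ^ (β/2 - 1)) =
      (β^2 * α / (8 * (Real.Gamma μ * Real.Gamma m / Real.Gamma (μ + m)))) * c₂ ^ m *
        v ^ (α * μ / 2 - 1) *
        ∫ y in Ioi (0:ℝ),
          y * Real.exp (-y * (β - α * μ) / 2) *
            (v ^ (α/2) * Real.exp (α * y / 2) + c₂) ^ (-(m + μ)) := by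
  rw [show Ioo (0:ℝ) 1 = Ioo 0 (exp (-0)) by simp, ← integral_comp_exp_neg_Ioi,
    ← integral_const_mul]
  exact setIntegral_congr_fun measurableSet_Ioi fun y _ ↦
    product_density_integrand_comp_exp_neg α μ m β c₂ _ hv y

theorem product_density_integral_form (α μ m β c₂ v : ℝ)
    (hα : 0 < α) (hμ : 0 < μ) (hm : 1 < m) (hβ : 0 < β) (hc₂ : 0 < c₂) (hv : 0 < v) :
    ∫ z in Ioo (0:ℝ) 1,
      (1 / z) *
        ((α / (2 * (Real.Gamma μ * Real.Gamma m / Real.Gamma (μ + m)))) * c₂ ^ m *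
          (v / z) ^ (α * μ / 2 - 1) * ((v / z) ^ (α/2) + c₂) ^ (-(m + μ))) *
        (-(β^2/4) * Real.log z * z ^ (β/2 - 1)) =
      (β^2 * α / (8 * (Real.Gamma μ * Real.Gamma m / Real.Gamma (μ + m)))) * c₂ ^ m *
        v ^ (α * μ / 2 - 1) *
        ∫ y in Ioi (0:ℝ),
          y * Real.exp (-y * (β - α * μ) / 2) *
            (v ^ (α/2) * Real.exp (α * y / 2) + c₂) ^ (-(m + μ)) :=
  product_density_integral_form_general α μ m β c₂ v hv
end
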